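/- Under the hypotheses of the echo state theorem for contracting reservoir maps with cL_w < 1, if additionally F is Lipschitz in its second argument with constant L_z, i.e. ‖F(x, z¹) − F(x, z²)‖ ≤ L_z‖z¹−z²‖, then the induced reservoir filter U^F is Lipschitz with constant L_z / (1 − c·L_w): ‖U^F(z¹) − U^F(z²)‖_w ≤ (L_z / (1 − c L_w)) ‖z¹ − z²‖_w for all inputs z¹, z². -/

import Mathlib

open Filter

/-!
Write `Δx = x¹ - x²`, `Δz = z¹ - z²`. Splitting `F(x¹_{t+1}, z¹_t) - F(x²_{t+1}, z²_t)` through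
`F(x²_{t+1}, z¹_t)` gives `‖Δx_t‖ ≤ c ‖Δx_{t+1}‖ + L_z ‖Δz_t‖`. Multiplying by `w_t ≤ L_w w_{t+1}`
and taking suprema yields `‖Δx‖_w ≤ c L_w ‖Δx‖_w + L_z ‖Δz‖_w`, which can be solved for `‖Δx‖_w`
because `‖Δx‖_w` is finite and `c L_w < 1`.
-/

/-- A weighting sequence: strictly decreasing, valued in `(0,1]`, with `w 0 = 1`
and zero limit. Sequences `z : ℤ₋ → ℝⁿ` are represented as `z : ℕ → (Fin n → ℝ)`,
where index `t : ℕ` stands for the time `-t`, so `w_{-t}` is `w t`. -/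
def IsWeighting (w : ℕ → ℝ) : Prop :=
  StrictAnti w ∧ (∀ t, 0 < w t) ∧ (∀ t, w t ≤ 1) ∧ w 0 = 1 ∧
    Tendsto w atTop (nhds 0)


/-- Membership in the weighted space `ℓ^w_-`: finite weighted sup norm. -/
def memLw {E : Type*} [NormedAddCommGroup E] (w : ℕ → ℝ) (z : ℕ → E) : Prop :=
  BddAbove (Set.range fun t => ‖z t‖ * w t)

/-- The weighted norm `‖z‖_w = sup_t ‖z_t‖ w_{-t}`. -/
noncomputable def wNorm {E : Type*} [NormedAddCommGroup E] (w : ℕ → ℝ) (z : ℕ → E) : ℝ :=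
  ⨆ t, ‖z t‖ * w t

section WeightedNorm

variable {E : Type*} [NormedAddCommGroup E] {w : ℕ → ℝ}

lemma memLw.sub (hw : ∀ t, 0 ≤ w t) {a b : ℕ → E} (ha : memLw w a) (hb : memLw w b) :
    memLw w (a - b) := by
  obtain ⟨A, hA⟩ := ha
  obtain ⟨B, hB⟩ := hb
  refine ⟨A + B, ?_⟩
  rintro _ ⟨t, rfl⟩
  calc ‖(a - b) t‖ * w t ≤ (‖a t‖ + ‖b t‖) * w t :=
        mul_le_mul_of_nonneg_right (norm_sub_le _ _) (hw t)
    _ = ‖a t‖ * w t + ‖b t‖ * w t := add_mul _ _ _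
    _ ≤ A + B := add_le_add (hA ⟨t, rfl⟩) (hB ⟨t, rfl⟩)

lemma norm_mul_le_wNorm {z : ℕ → E} (hz : memLw w z) (t : ℕ) : ‖z t‖ * w t ≤ wNorm w z :=
  le_ciSup hz t

lemma wNorm_le {z : ℕ → E} {C : ℝ} (h : ∀ t, ‖z t‖ * w t ≤ C) : wNorm w z ≤ C :=
  ciSup_le h

lemma wNorm_zero : wNorm w (0 : ℕ → E) = 0 := by
  simp [wNorm]

end WeightedNorm

section Recursion

variable {E G : Type*} [NormedAddCommGroup E] [NormedAddCommGroup G]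

lemma norm_sub_le_of_lipschitz_left_right {F : E → G → E} {c K : ℝ}
    (hcontr : ∀ x₁ x₂ z, ‖F x₁ z - F x₂ z‖ ≤ c * ‖x₁ - x₂‖)
    (hK : ∀ x z₁ z₂, ‖F x z₁ - F x z₂‖ ≤ K * ‖z₁ - z₂‖) (x₁ x₂ : E) (z₁ z₂ : G) :
    ‖F x₁ z₁ - F x₂ z₂‖ ≤ c * ‖x₁ - x₂‖ + K * ‖z₁ - z₂‖ :=
  calc ‖F x₁ z₁ - F x₂ z₂‖ = ‖(F x₁ z₁ - F x₂ z₁) + (F x₂ z₁ - F x₂ z₂)‖ := by abel_nf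
    _ ≤ ‖F x₁ z₁ - F x₂ z₁‖ + ‖F x₂ z₁ - F x₂ z₂‖ := norm_add_le _ _
    _ ≤ c * ‖x₁ - x₂‖ + K * ‖z₁ - z₂‖ := add_le_add (hcontr _ _ _) (hK _ _ _)

lemma eq_of_norm_sub_le_neg_mul {f : G → E} {K : ℝ} (hK : K < 0)
    (hf : ∀ a b, ‖f a - f b‖ ≤ K * ‖a - b‖) (a b : G) : a = b := by
  have : ‖a - b‖ ≤ 0 := nonpos_of_mul_nonneg_right ((norm_nonneg _).trans (hf a b)) hK
  exact sub_eq_zero.1 (norm_le_zero_iff.1 this)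

variable {w : ℕ → ℝ} {c K Lw : ℝ} {x : ℕ → E} {z : ℕ → G}

lemma wNorm_le_of_recursion (hw : ∀ t, 0 < w t) (hLw : ∀ t, w t / w (t + 1) ≤ Lw)
    (hc : 0 ≤ c) (hK : 0 ≤ K) (hx : memLw w x) (hz : memLw w z)
    (hrec : ∀ t, ‖x t‖ ≤ c * ‖x (t + 1)‖ + K * ‖z t‖) :
    wNorm w x ≤ c * Lw * wNorm w x + K * wNorm w z := by
  have hshift : ∀ t, w t ≤ Lw * w (t + 1) := fun t => (div_le_iff₀ (hw (t + 1))).1 (hLw t)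
  have hLw0 : 0 ≤ Lw := (div_nonneg (hw 0).le (hw 1).le).trans (hLw 0)
  refine wNorm_le fun t => ?_
  calc ‖x t‖ * w t ≤ (c * ‖x (t + 1)‖ + K * ‖z t‖) * w t :=
        mul_le_mul_of_nonneg_right (hrec t) (hw t).le
    _ = c * (‖x (t + 1)‖ * w t) + K * (‖z t‖ * w t) := by ring
    _ ≤ c * (Lw * (‖x (t + 1)‖ * w (t + 1))) + K * wNorm w z := by
        have hxt : ‖x (t + 1)‖ * w t ≤ Lw * (‖x (t + 1)‖ * w (t + 1)) := by
          rw [mul_left_comm]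
          exact mul_le_mul_of_nonneg_left (hshift t) (norm_nonneg _)
        exact add_le_add (mul_le_mul_of_nonneg_left hxt hc)
          (mul_le_mul_of_nonneg_left (norm_mul_le_wNorm hz t) hK)
    _ ≤ c * (Lw * wNorm w x) + K * wNorm w z := by
        gcongr
        exact norm_mul_le_wNorm hx (t + 1)
    _ = c * Lw * wNorm w x + K * wNorm w z := by ring

lemma wNorm_le_div_of_recursion (hw : ∀ t, 0 < w t) (hLw : ∀ t, w t / w (t + 1) ≤ Lw)
    (hc : 0 ≤ c) (hK : 0 ≤ K) (hcLw : c * Lw < 1) (hx : memLw w x) (hz : memLw w z)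
    (hrec : ∀ t, ‖x t‖ ≤ c * ‖x (t + 1)‖ + K * ‖z t‖) :
    wNorm w x ≤ K / (1 - c * Lw) * wNorm w z := by
  have h := wNorm_le_of_recursion hw hLw hc hK hx hz hrec
  rw [div_mul_eq_mul_div, le_div_iff₀ (sub_pos.2 hcLw)]
  linarith

end Recursion

theorem reservoir_filter_lipschitz_general (n N : ℕ)
    (F : (Fin N → ℝ) → (Fin n → ℝ) → (Fin N → ℝ))
    (c : ℝ) (hc0 : 0 < c)
    (hcontr : ∀ x1 x2 : Fin N → ℝ, ∀ z : Fin n → ℝ, ‖F x1 z - F x2 z‖ ≤ c * ‖x1 - x2‖)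
    (Lz : ℝ) (hLz : ∀ x : Fin N → ℝ, ∀ z1 z2 : Fin n → ℝ,
      ‖F x z1 - F x z2‖ ≤ Lz * ‖z1 - z2‖)
    (w : ℕ → ℝ) (hw : IsWeighting w)
    (Lw : ℝ) (hLw : ∀ t, w t / w (t + 1) ≤ Lw) (hcLw : c * Lw < 1)
    (z1 z2 : ℕ → (Fin n → ℝ)) (hz1 : memLw w z1) (hz2 : memLw w z2)
    (x1 x2 : ℕ → (Fin N → ℝ)) (hx1 : memLw w x1) (hx2 : memLw w x2)
    (hs1 : ∀ k, x1 k = F (x1 (k + 1)) (z1 k))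
    (hs2 : ∀ k, x2 k = F (x2 (k + 1)) (z2 k)) :
    wNorm w (x1 - x2) ≤ (Lz / (1 - c * Lw)) * wNorm w (z1 - z2) := by
  obtain ⟨-, hwpos, -⟩ := hw
  have hdx := hx1.sub (fun t => (hwpos t).le) hx2
  have hdz := hz1.sub (fun t => (hwpos t).le) hz2
  have hrec : ∀ t, ‖(x1 - x2) t‖ ≤ c * ‖(x1 - x2) (t + 1)‖ + Lz * ‖(z1 - z2) t‖ := fun t => by
    simpa only [Pi.sub_apply, ← hs1 t, ← hs2 t] using
      norm_sub_le_of_lipschitz_left_right hcontr hLz (x1 (t + 1)) (x2 (t + 1)) (z1 t) (z2 t)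
  rcases le_or_gt 0 Lz with hLz0 | hLz0
  · exact wNorm_le_div_of_recursion hwpos hLw hc0.le hLz0 hcLw hdx hdz hrec
  · -- A negative input constant forces the input space to be trivial.
    obtain rfl : z1 = z2 := funext fun t => eq_of_norm_sub_le_neg_mul hLz0 (hLz 0) _ _
    have := wNorm_le_div_of_recursion hwpos hLw hc0.le le_rfl hcLw hdx hdz
      (by simpa using hrec)
    simpa [wNorm_zero] using this

/-- If the reservoir map `F` is a contraction in the state with constant `c`,
Lipschitz in the input with constant `L_z`, and `c L_w < 1`, then the reservoir
filter `U^F` (characterized by the reservoir equation, here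
`x k = F (x (k+1)) (z k)` with `k : ℕ` standing for time `-k`) is Lipschitz with
constant `L_z / (1 - c L_w)` for the weighted norms. -/
theorem reservoir_filter_lipschitz (n N : ℕ)
    (F : (Fin N → ℝ) → (Fin n → ℝ) → (Fin N → ℝ))
    (c : ℝ) (hc0 : 0 < c) (hc1 : c < 1)
    (hcontr : ∀ x1 x2 : Fin N → ℝ, ∀ z : Fin n → ℝ, ‖F x1 z - F x2 z‖ ≤ c * ‖x1 - x2‖)
    (Lz : ℝ) (hLz : ∀ x : Fin N → ℝ, ∀ z1 z2 : Fin n → ℝ,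
      ‖F x z1 - F x z2‖ ≤ Lz * ‖z1 - z2‖)
    (w : ℕ → ℝ) (hw : IsWeighting w)
    (Lw : ℝ) (hLw : ∀ t, w t / w (t + 1) ≤ Lw) (hcLw : c * Lw < 1)
    (z1 z2 : ℕ → (Fin n → ℝ)) (hz1 : memLw w z1) (hz2 : memLw w z2)
    (x1 x2 : ℕ → (Fin N → ℝ)) (hx1 : memLw w x1) (hx2 : memLw w x2)
    (hs1 : ∀ k, x1 k = F (x1 (k + 1)) (z1 k))
    (hs2 : ∀ k, x2 k = F (x2 (k + 1)) (z2 k)) :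
    wNorm w (x1 - x2) ≤ (Lz / (1 - c * Lw)) * wNorm w (z1 - z2) :=
  reservoir_filter_lipschitz_general n N F c hc0 hcontr Lz hLz w hw Lw hLw hcLw z1 z2 hz1 hz2 x1 x2
    hx1 hx2 hs1 hs2
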